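/- arXiv:1111.6692 — 2 statements merged into one kernel-verified Lean document; each statement's English description precedes it below -/
import Mathlib

section
/- There is a constant C such that for all q, N ≥ 2 with q ≤ N and all a coprime to q, ψ(N; q, a) ≤ C · (N/q) · log N, where ψ(N;q,a) = ∑_{n ≤ N, n ≡ a mod q} Λ(n). -/
/-! Each term is at most `log N`, and a residue class mod `q` meets `[1, N]` in at most
`N / q + 1 ≤ 2 N / q` points, so `C = 2` works. -/

open ArithmeticFunction

theorem vonMangoldt_le_log_of_le {n N : ℕ} (h : n ≤ N) : Λ n ≤ Real.log N := by
  rcases Nat.eq_zero_or_pos n with rfl | hn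
  · simpa using Real.log_natCast_nonneg N
  · exact vonMangoldt_le_log.trans (Real.log_le_log (by exact_mod_cast hn) (by exact_mod_cast h))

theorem sum_vonMangoldt_le_card_mul_log (s : Finset ℕ) {N : ℕ} (hs : ∀ n ∈ s, n ≤ N) :
    ∑ n ∈ s, Λ n ≤ s.card * Real.log N := by
  simpa using Finset.sum_le_card_nsmul s _ _ fun n hn => vonMangoldt_le_log_of_le (hs n hn)

/-- `n ↦ n / q` is injective on a residue class and maps `[1, N]` into `[0, N / q]`. -/
theorem card_filter_mod_eq_le (N q r : ℕ) :
    ((Finset.Icc 1 N).filter (fun n => n % q = r)).card ≤ N / q + 1 := by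
  simpa using Finset.card_le_card_of_injOn (t := Finset.range (N / q + 1)) (· / q)
    (fun n hn => by
      simp only [Finset.coe_filter, Finset.mem_Icc, Set.mem_ofPred_eq] at hn
      simpa [Nat.lt_succ_iff] using Nat.div_le_div_right hn.1.2)
    (fun n₁ h₁ n₂ h₂ (h : n₁ / q = n₂ / q) => by
      simp only [Finset.coe_filter, Finset.mem_Icc, Set.mem_ofPred_eq] at h₁ h₂
      rw [← Nat.div_add_mod n₁ q, ← Nat.div_add_mod n₂ q, h, h₁.2, h₂.2])

theorem cast_div_add_one_le_two_mul_div {q N : ℕ} (hq : 0 < q) (hqN : q ≤ N) :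
    ((N / q + 1 : ℕ) : ℝ) ≤ 2 * ((N : ℝ) / q) := by
  have hqR : (0 : ℝ) < q := by exact_mod_cast hq
  have hone : (1 : ℝ) ≤ (N : ℝ) / q := by
    rw [le_div_iff₀ hqR, one_mul]; exact_mod_cast hqN
  push_cast
  linarith [(Nat.cast_div_le : ((N / q : ℕ) : ℝ) ≤ (N : ℝ) / q)]

theorem stmt_4 :
    ∃ C : ℝ, 0 < C ∧ ∀ q N : ℕ, 2 ≤ q → 2 ≤ N → q ≤ N →
      ∀ a : ℕ, Nat.Coprime a q →
        ∑ n ∈ (Finset.Icc 1 N).filter (fun n => n % q = a % q), Λ n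
          ≤ C * ((N : ℝ) / q) * Real.log N := by
  refine ⟨2, two_pos, fun q N hq _ hqN a _ => ?_⟩
  set S := (Finset.Icc 1 N).filter (fun n => n % q = a % q)
  have hS : ∀ n ∈ S, n ≤ N := fun n hn => (Finset.mem_Icc.mp (Finset.mem_filter.mp hn).1).2
  calc ∑ n ∈ S, Λ n ≤ S.card * Real.log N := sum_vonMangoldt_le_card_mul_log S hS
    _ ≤ ((N / q + 1 : ℕ) : ℝ) * Real.log N := by
        gcongr
        exact card_filter_mod_eq_le N q (a % q)
    _ ≤ 2 * ((N : ℝ) / q) * Real.log N := by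
        gcongr
        exact cast_div_add_one_le_two_mul_div (by omega) hqN
end

section
/- Let m = p₁^{a₁}···p_r^{a_r} and let H be a finite set of k integers all divisible by m with ν_p(H) < p for all primes p. Define ρ₁ multiplicatively on squarefree integers by ρ₁(p) = 0 if p | m and ρ₁(p) = ν_p(H) otherwise, and define ρ₃ by ρ₃(p) = 0 if p | m and ρ₃(p) = p(ν_p(H) − 1)/(p − 1) otherwise. Then the ratio of singular series satisfies 𝔖(ρ₃)/𝔖(ρ₁) = ∏_{i=1}^r (1 − 1/p_i) = φ(m)/m, where 𝔖(ρ) = ∏_p (1 − ρ(p)/p)(1 − 1/p)^{−k} for ρ = ρ₁ and 𝔖(ρ₃) = ∏_p (1 − ρ₃(p)/p)(1 − 1/p)^{−(k−1)}. -/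
/-!
Write `S_k(r, p) = (1 - r/p)(1 - 1/p)^(-k)` for the local factor of a singular series. The
definition of `ρ₃` is exactly what makes `S_(k-1)(p(ν - 1)/(p - 1), p) = S_k(ν, p)`, while for
`p ∣ m` one has `S_(k-1)(0, p) = (1 - 1/p) S_k(0, p)`. So the `ρ₃`-series is the `ρ₁`-series times
the finite product `∏_{p ∣ m} (1 - 1/p) = φ(m)/m`, and the ratio is this product once the
`ρ₁`-series is known to converge to a nonzero limit. That holds because `ν_p(H) = k` for large `p`,
and then `|S_k(k, p) - 1| ≤ 2k²/p²` is summable over primes.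
-/

open Filter

noncomputable def singularFactor (k : ℤ) (r p : ℝ) : ℝ :=
  (1 - r / p) * (1 - 1 / p) ^ (-k)

lemma pow_one_sub_le {x : ℝ} (hx₀ : 0 ≤ x) (hx₁ : x ≤ 1) (n : ℕ) :
    (1 - x) ^ n ≤ 1 - n * x + n ^ 2 * x ^ 2 := by
  induction n with
  | zero => simp
  | succ n ih =>
    have := mul_le_mul_of_nonneg_right ih (sub_nonneg.mpr hx₁)
    rw [pow_succ]
    push_cast
    nlinarith [mul_nonneg (Nat.cast_nonneg n : (0 : ℝ) ≤ n) (sq_nonneg x),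
      mul_nonneg (mul_nonneg (sq_nonneg (n : ℝ)) (sq_nonneg x)) hx₀]

lemma abs_one_sub_mul_div_pow_sub_one_le {x : ℝ} (k : ℕ) (hx₀ : 0 ≤ x) (hx₁ : x ≤ 1)
    (hkx : k * x ≤ 1 / 2) :
    |(1 - k * x) / (1 - x) ^ k - 1| ≤ 2 * k ^ 2 * x ^ 2 := by
  have hlower : 1 - k * x ≤ (1 - x) ^ k := by
    simpa [sub_eq_add_neg] using one_add_mul_le_pow (a := -x) (by linarith) k
  have hupper := pow_one_sub_le hx₀ hx₁ k
  have hpos : 1 / 2 ≤ (1 - x) ^ k := by linarith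
  rw [div_sub_one (by positivity), abs_div, abs_of_nonpos (by linarith),
    abs_of_pos (by positivity), div_le_iff₀ (by positivity)]
  nlinarith [sq_nonneg ((k : ℝ) * x)]

lemma singularFactor_pos (k : ℤ) {r p : ℝ} (hr : r < p) (hp : 1 < p) :
    0 < singularFactor k r p := by
  have hp₀ : 0 < p := by linarith
  unfold singularFactor
  apply mul_pos
  · rwa [sub_pos, div_lt_one hp₀]
  · apply zpow_pos
    rwa [sub_pos, div_lt_one hp₀]

lemma abs_singularFactor_sub_one_le (k : ℕ) {p : ℝ} (hp : 1 ≤ p) (hkp : 2 * k ≤ p) :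
    |singularFactor k k p - 1| ≤ 2 * k ^ 2 / p ^ 2 := by
  have hp₀ : 0 < p := by linarith
  have h := abs_one_sub_mul_div_pow_sub_one_le k (x := 1 / p) (by positivity)
    ((div_le_one hp₀).mpr hp) (by rw [mul_one_div, div_le_iff₀ hp₀]; linarith)
  rw [singularFactor, zpow_neg, zpow_natCast, ← div_eq_mul_inv, ← mul_one_div (k : ℝ) p]
  simpa [div_pow, div_eq_mul_inv, mul_assoc] using h

lemma singularFactor_sub_one_eq {p : ℝ} (hp₀ : p ≠ 0) (hp₁ : p ≠ 1) (k : ℤ) (r : ℝ) :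
    singularFactor (k - 1) r p = (1 - r / p) * (1 - 1 / p) * (1 - 1 / p) ^ (-k) := by
  have hx : 1 - 1 / p ≠ 0 := by
    rw [one_sub_div hp₀]; exact div_ne_zero (sub_ne_zero.mpr hp₁) hp₀
  rw [singularFactor, show -(k - 1) = 1 + -k by ring, zpow_add₀ hx, zpow_one, mul_assoc]

lemma singularFactor_sub_one_zero {p : ℝ} (hp₀ : p ≠ 0) (hp₁ : p ≠ 1) (k : ℤ) :
    singularFactor (k - 1) 0 p = (1 - 1 / p) * singularFactor k 0 p := by
  rw [singularFactor_sub_one_eq hp₀ hp₁, singularFactor]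
  ring

lemma singularFactor_sub_one {p : ℝ} (hp₀ : p ≠ 0) (hp₁ : p ≠ 1) (k : ℤ) (v : ℝ) :
    singularFactor (k - 1) (p * (v - 1) / (p - 1)) p = singularFactor k v p := by
  have hp₁' : p - 1 ≠ 0 := sub_ne_zero.mpr hp₁
  rw [singularFactor_sub_one_eq hp₀ hp₁, singularFactor]
  congr 1
  field_simp
  ring

namespace Nat.Primes

lemma eventually_cofinite_of_atTop {P : ℕ → Prop} (h : ∀ᶠ n in atTop, P n) :
    ∀ᶠ p : Nat.Primes in cofinite, P p :=
  coe_nat_injective.tendsto_cofinite.eventually (Nat.cofinite_eq_atTop ▸ h)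

lemma summable_norm_singularFactor_sub_one (k : ℕ) {ρ : Nat.Primes → ℝ}
    (hρ : ∀ᶠ p in cofinite, ρ p = k) :
    Summable fun p : Nat.Primes => ‖singularFactor k (ρ p) p - 1‖ := by
  have hsum : Summable fun p : Nat.Primes => 2 * (k : ℝ) ^ 2 * ((p : ℕ) : ℝ) ^ (-2 : ℝ) :=
    (summable_rpow.mpr (by norm_num)).mul_left _
  refine hsum.of_norm_bounded_eventually ?_
  filter_upwards [hρ, eventually_cofinite_of_atTop (eventually_ge_atTop (2 * k))] with p hρp hp
  have hp₁ : (1 : ℝ) ≤ (p : ℕ) := by exact_mod_cast p.2.one_le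
  have hkp : 2 * (k : ℝ) ≤ (p : ℕ) := by exact_mod_cast hp
  rw [norm_norm, Real.norm_eq_abs, hρp, Real.rpow_neg (by positivity), Real.rpow_two,
    ← div_eq_mul_inv]
  exact_mod_cast abs_singularFactor_sub_one_le k hp₁ hkp

lemma multipliable_singularFactor (k : ℕ) {ρ : Nat.Primes → ℝ}
    (hρ : ∀ᶠ p in cofinite, ρ p = k) :
    Multipliable fun p : Nat.Primes => singularFactor k (ρ p) p := by
  simpa using multipliable_one_add_of_summable (summable_norm_singularFactor_sub_one k hρ)

lemma tprod_singularFactor_ne_zero (k : ℕ) {ρ : Nat.Primes → ℝ}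
    (hρ : ∀ᶠ p in cofinite, ρ p = k) (hρp : ∀ p : Nat.Primes, ρ p < p) :
    ∏' p : Nat.Primes, singularFactor k (ρ p) p ≠ 0 := by
  simpa using tprod_one_add_ne_zero_of_summable
    (fun p => by simpa using (singularFactor_pos k (hρp p) (by exact_mod_cast p.2.one_lt)).ne')
    (summable_norm_singularFactor_sub_one k hρ)

lemma hasProd_ite_dvd {M : Type*} [CommMonoid M] [TopologicalSpace M]
    {m : ℕ} (hm : m ≠ 0) (f : ℕ → M) :
    HasProd (fun p : Nat.Primes => if (p : ℕ) ∣ m then f p else 1)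
      (∏ p ∈ m.primeFactors, f p) := by
  classical
  have hprod : ∏ p ∈ m.primeFactors.subtype Nat.Prime,
      (if ((p : Nat.Primes) : ℕ) ∣ m then f p else 1) = ∏ p ∈ m.primeFactors, f p := by
    rw [Finset.prod_subtype_eq_prod_filter (fun p => if p ∣ m then f p else 1),
      Finset.filter_true_of_mem fun p hp => Nat.prime_of_mem_primeFactors hp]
    exact Finset.prod_congr rfl fun p hp => if_pos (Nat.dvd_of_mem_primeFactors hp)
  rw [← hprod]
  refine hasProd_prod_of_ne_finset_one fun p hp => if_neg fun hdvd => hp ?_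
  exact Finset.mem_subtype.mpr (Nat.mem_primeFactors.mpr ⟨p.2, hdvd, hm⟩)

end Nat.Primes

lemma Finset.eventually_card_image_intCast_zmod (H : Finset ℤ) :
    ∀ᶠ p in atTop, (H.image fun h : ℤ => (h : ZMod p)).card = H.card := by
  obtain ⟨N, hN⟩ := (H.image Int.natAbs).exists_le
  filter_upwards [eventually_gt_atTop (2 * N)] with p hp
  refine Finset.card_image_of_injOn fun a ha b hb hab => ?_
  have hdvd := (ZMod.intCast_eq_intCast_iff_dvd_sub b a p).mp hab.symm
  have haN := hN _ (Finset.mem_image_of_mem _ ha)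
  have hbN := hN _ (Finset.mem_image_of_mem _ hb)
  have hlt : |a - b| < p := by
    rw [Int.abs_eq_natAbs]
    have := Int.natAbs_sub_le a b
    omega
  linarith [Int.eq_zero_of_abs_lt_dvd hdvd hlt]

lemma Nat.prod_primeFactors_one_sub_one_div {n : ℕ} (hn : n ≠ 0) :
    ∏ p ∈ n.primeFactors, (1 - 1 / (p : ℝ)) = n.totient / n := by
  have h := congrArg ((↑) : ℚ → ℝ) (Nat.totient_eq_mul_prod_factors n)
  push_cast at h
  rw [h, mul_div_cancel_left₀ _ (Nat.cast_ne_zero.mpr hn)]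
  simp [one_div]

theorem stmt_13_general (m k : ℕ) (hm : 0 < m) (H : Finset ℤ) (hcard : H.card = k)
    (ν : ℕ → ℕ)
    (hν : ∀ p : ℕ, ν p = (H.image (fun h : ℤ => ((h : ℤ) : ZMod p))).card)
    (hνp : ∀ p : ℕ, p.Prime → ν p < p)
    (ρ₁ ρ₃ : ℕ → ℝ)
    (hρ₁ : ∀ p : ℕ, ρ₁ p = if p ∣ m then 0 else (ν p : ℝ))
    (hρ₃ : ∀ p : ℕ, ρ₃ p = if p ∣ m then 0
      else (p : ℝ) * ((ν p : ℝ) - 1) / ((p : ℝ) - 1)) :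
    (∏' p : Nat.Primes, (1 - ρ₃ p / ((p : ℕ) : ℝ)) *
        (1 - 1 / ((p : ℕ) : ℝ)) ^ (-((k : ℤ) - 1))) /
      (∏' p : Nat.Primes, (1 - ρ₁ p / ((p : ℕ) : ℝ)) *
        (1 - 1 / ((p : ℕ) : ℝ)) ^ (-(k : ℤ)))
      = ∏ p ∈ m.primeFactors, (1 - 1 / (p : ℝ)) ∧
    ∏ p ∈ m.primeFactors, (1 - 1 / (p : ℝ)) = (Nat.totient m : ℝ) / m := by
  refine ⟨?_, Nat.prod_primeFactors_one_sub_one_div hm.ne'⟩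
  have hρ₁k : ∀ᶠ p : Nat.Primes in cofinite, ρ₁ p = k := by
    filter_upwards [Nat.Primes.eventually_cofinite_of_atTop
      ((H.eventually_card_image_intCast_zmod).and (eventually_gt_atTop m))] with p ⟨hνk, hpm⟩
    rw [hρ₁, if_neg (Nat.not_dvd_of_pos_of_lt hm hpm), hν, hνk, hcard]
  have hρ₁p (p : Nat.Primes) : ρ₁ p < p := by
    rw [hρ₁]
    split_ifs
    · exact_mod_cast p.2.pos
    · exact_mod_cast hνp p p.2
  have hfactor (p : Nat.Primes) : singularFactor (k - 1) (ρ₃ p) p =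
      (if (p : ℕ) ∣ m then 1 - 1 / ((p : ℕ) : ℝ) else 1) * singularFactor k (ρ₁ p) p := by
    have hp₀ : ((p : ℕ) : ℝ) ≠ 0 := by exact_mod_cast p.2.ne_zero
    have hp₁ : ((p : ℕ) : ℝ) ≠ 1 := by exact_mod_cast p.2.ne_one
    rw [hρ₁, hρ₃]
    split_ifs
    · exact singularFactor_sub_one_zero hp₀ hp₁ k
    · rw [one_mul, singularFactor_sub_one hp₀ hp₁]
  have hc := Nat.Primes.hasProd_ite_dvd hm.ne' fun p => 1 - 1 / (p : ℝ)
  change (∏' p : Nat.Primes, singularFactor ((k : ℤ) - 1) (ρ₃ p) p) /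
    ∏' p : Nat.Primes, singularFactor k (ρ₁ p) p = _
  rw [tprod_congr hfactor,
    hc.multipliable.tprod_mul (Nat.Primes.multipliable_singularFactor k hρ₁k), hc.tprod_eq,
    mul_div_cancel_right₀ _ (Nat.Primes.tprod_singularFactor_ne_zero k hρ₁k hρ₁p)]

theorem stmt_13 (m k : ℕ) (hm : 0 < m) (H : Finset ℤ) (hcard : H.card = k)
    (hk : 1 ≤ k) (hH : ∀ h ∈ H, (m : ℤ) ∣ h)
    (ν : ℕ → ℕ)
    (hν : ∀ p : ℕ, ν p = (H.image (fun h : ℤ => ((h : ℤ) : ZMod p))).card)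
    (hνp : ∀ p : ℕ, p.Prime → ν p < p)
    (ρ₁ ρ₃ : ℕ → ℝ)
    (hρ₁ : ∀ p : ℕ, ρ₁ p = if p ∣ m then 0 else (ν p : ℝ))
    (hρ₃ : ∀ p : ℕ, ρ₃ p = if p ∣ m then 0
      else (p : ℝ) * ((ν p : ℝ) - 1) / ((p : ℝ) - 1)) :
    (∏' p : Nat.Primes, (1 - ρ₃ p / ((p : ℕ) : ℝ)) *
        (1 - 1 / ((p : ℕ) : ℝ)) ^ (-((k : ℤ) - 1))) /
      (∏' p : Nat.Primes, (1 - ρ₁ p / ((p : ℕ) : ℝ)) *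
        (1 - 1 / ((p : ℕ) : ℝ)) ^ (-(k : ℤ)))
      = ∏ p ∈ m.primeFactors, (1 - 1 / (p : ℝ)) ∧
    ∏ p ∈ m.primeFactors, (1 - 1 / (p : ℝ)) = (Nat.totient m : ℝ) / m :=
  stmt_13_general m k hm H hcard ν hν hνp ρ₁ ρ₃ hρ₁ hρ₃
end
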